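/- arXiv:1803.08560 — 2 statements merged into one kernel-verified Lean document; each statement's English description precedes it below -/
import Mathlib

section
/- For smooth, rapidly decaying f, g : ℝ → ℂ, the commutator [f, H]g of multiplication by f with the Hilbert transform H satisfies ‖[f,H]g‖_{L∞} ≤ C ‖f'‖_{L²} ‖g‖_{L²} for a universal constant C. -/
open MeasureTheory Filter
open scoped ENNReal

/-- The Hilbert transform on `ℝ`, `Hf(x) = (1/(πi)) p.v. ∫ f(y)/(x-y) dy`, defined as the
limit of the truncated singular integrals as the truncation parameter `ε → 0⁺`. -/
noncomputable def hilbertT (f : ℝ → ℂ) (x : ℝ) : ℂ :=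
  limUnder (nhdsWithin 0 (Set.Ioi (0 : ℝ))) (fun ε : ℝ =>
    ((Real.pi : ℂ) * Complex.I)⁻¹ * ∫ y in {y : ℝ | ε < |x - y|}, f y / ((x : ℂ) - (y : ℂ)))

/-- The commutator `[f, H]g = f · Hg − H(fg)` of multiplication by `f` with the Hilbert
transform. -/
noncomputable def commHilbert (f g : ℝ → ℂ) : ℝ → ℂ :=
  fun x => f x * hilbertT g x - hilbertT (fun y => f y * g y) x


/-!
Near `x` the commutator kernel `(f x - f y) / (x - y) * g y` is bounded, so `[f, H] g (x)` is
an absolutely convergent integral: subtracting the value at `x` on `|x - y| < 1` (harmless,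
`1 / (x - y)` being odd) shows that the truncated integrals defining `H g` and `H (f g)`
converge, and combining the limits leaves `(πi)⁻¹ ∫ slope f x y * g y dy`. Cauchy–Schwarz
bounds this by `‖slope f x‖₂ ‖g‖₂`, and Hardy's inequality `‖slope f x‖₂ ≤ 2 ‖f'‖₂` follows from
`slope f x y = ∫₀¹ f' (x + (y - x) u) du`, Cauchy–Schwarz in `u` with weights `u ^ (∓1/4)`,
and the rescaling `y ↦ x + (y - x) u`. As `|(πi)⁻¹| ≤ 1`, the constant `C = 2` works.
-/

open Set Metric
open scoped NNReal Topology SchwartzMap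

theorem integral_eq_zero_of_odd {G E : Type*} [MeasurableSpace G] [AddGroup G]
    [MeasurableNeg G] [NormedAddCommGroup E] [NormedSpace ℝ E] {μ : Measure G}
    [μ.IsNegInvariant] {f : G → E} (hf : f.Odd) : ∫ x, f x ∂μ = 0 := by
  have h := integral_neg_eq_self f μ
  rw [show (fun x => f (-x)) = fun x => -f x from funext hf, integral_neg] at h
  simpa [← two_smul ℝ] using neg_eq_iff_add_eq_zero.mp h

theorem tendsto_setIntegral_lt_abs_sub {E : Type*} [NormedAddCommGroup E] [NormedSpace ℝ E]
    {μ : Measure ℝ} [NullSingletonClass μ] {k : ℝ → E} (hk : Integrable k μ) (x : ℝ) :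
    Tendsto (fun ε : ℝ => ∫ y in {y | ε < |x - y|}, k y ∂μ) (𝓝[>] 0) (𝓝 (∫ y, k y ∂μ)) := by
  have hS (ε : ℝ) : MeasurableSet {y : ℝ | ε < |x - y|} :=
    measurableSet_lt measurable_const (by fun_prop)
  simp_rw [← integral_indicator (hS _)]
  refine tendsto_integral_filter_of_dominated_convergence (fun y => ‖k y‖)
    (.of_forall fun ε => hk.aestronglyMeasurable.indicator (hS ε))
    (.of_forall fun ε => .of_forall fun y => norm_indicator_le_norm_self _ _) hk.norm ?_
  filter_upwards [compl_mem_ae_iff.mpr (measure_singleton x)] with y hy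
  have hxy : 0 < |x - y| := abs_pos.mpr (sub_ne_zero.mpr (Ne.symm hy))
  refine tendsto_const_nhds.congr' ?_
  filter_upwards [Ioo_mem_nhdsGT hxy] with ε hε
  exact (indicator_of_mem (show y ∈ {y : ℝ | ε < |x - y|} from hε.2) k).symm

theorem norm_ofReal_sub_ofReal (x y : ℝ) : ‖(x : ℂ) - (y : ℂ)‖ = |x - y| := by
  rw [← Complex.ofReal_sub, Complex.norm_real, Real.norm_eq_abs]

/-- The integrand of the truncated Hilbert transform of `h` at `x`, with `h x` subtracted on the
unit ball: by oddness of `1 / (x - y)` this leaves the truncated integrals unchanged, but it makes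
the integrand integrable. -/
noncomputable def hilbertIntegrand (h : ℝ → ℂ) (x y : ℝ) : ℂ :=
  (h y - (ball x 1).indicator (fun _ => h x) y) / ((x : ℂ) - (y : ℂ))

section Lipschitz

variable {h : ℝ → ℂ} {K : ℝ≥0}

theorem norm_hilbertIntegrand_le (hh : LipschitzWith K h) (x y : ℝ) :
    ‖hilbertIntegrand h x y‖ ≤ (ball x 1).indicator (fun _ => (K : ℝ)) y + ‖h y‖ := by
  rw [hilbertIntegrand, norm_div, norm_ofReal_sub_ofReal]
  by_cases hy : y ∈ ball x 1
  · rw [indicator_of_mem hy, indicator_of_mem hy]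
    have hlip : ‖h y - h x‖ ≤ K * |x - y| := by
      simpa [dist_eq_norm, Real.dist_eq, abs_sub_comm] using hh.dist_le_mul y x
    exact (div_le_of_le_mul₀ (abs_nonneg _) K.coe_nonneg hlip).trans
      (le_add_of_nonneg_right (norm_nonneg _))
  · have hfar : 1 ≤ |x - y| := by
      simpa [Real.dist_eq, abs_sub_comm] using hy
    rw [indicator_of_notMem hy, indicator_of_notMem hy, sub_zero, zero_add]
    exact div_le_self (norm_nonneg _) hfar

theorem integrable_hilbertIntegrand (hh : LipschitzWith K h) (hi : Integrable h) (x : ℝ) :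
    Integrable (hilbertIntegrand h x) := by
  refine Integrable.mono' (((integrableOn_const measure_ball_lt_top.ne).integrable_indicator
      measurableSet_ball).add hi.norm) ?_ (.of_forall (norm_hilbertIntegrand_le hh x))
  unfold hilbertIntegrand
  exact ((hh.continuous.measurable.sub (measurable_const.indicator measurableSet_ball)).div
    (by fun_prop)).aestronglyMeasurable

theorem setIntegral_div_sub_eq_setIntegral_hilbertIntegrand (hh : LipschitzWith K h)
    (hi : Integrable h) (x : ℝ) {ε : ℝ} (hε : 0 < ε) :
    ∫ y in {y | ε < |x - y|}, h y / ((x : ℂ) - (y : ℂ)) =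
      ∫ y in {y | ε < |x - y|}, hilbertIntegrand h x y := by
  set S := {y : ℝ | ε < |x - y|}
  have hS : MeasurableSet S := measurableSet_lt measurable_const (by fun_prop)
  set ψ : ℝ → ℂ := fun y => (ball x 1).indicator (fun _ => h x) y / ((x : ℂ) - (y : ℂ))
  have hsplit : (fun y => h y / ((x : ℂ) - (y : ℂ))) = fun y => hilbertIntegrand h x y + ψ y := by
    ext y
    simp only [hilbertIntegrand, ψ]
    ring
  have hφ : IntegrableOn (fun y => h y / ((x : ℂ) - (y : ℂ))) S := by
    refine Integrable.mono' (hi.norm.const_mul ε⁻¹).integrableOn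
      ((hh.continuous.measurable.div (by fun_prop)).aestronglyMeasurable)
      ((ae_restrict_iff' hS).mpr (.of_forall fun y (hy : ε < |x - y|) => ?_))
    rw [norm_div, norm_ofReal_sub_ofReal, div_eq_inv_mul]
    exact mul_le_mul_of_nonneg_right (inv_anti₀ hε hy.le) (norm_nonneg _)
  have hI : IntegrableOn (hilbertIntegrand h x) S :=
    (integrable_hilbertIntegrand hh hi x).integrableOn
  have hψ : IntegrableOn ψ S := by
    refine (hφ.sub hI).congr_fun (fun y _ => ?_) hS
    simp only [Pi.sub_apply, hsplit, add_sub_cancel_left]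
  have hψ0 : ∫ y in S, ψ y = 0 := by
    set G : ℝ → ℂ := fun t => if ε < |t| ∧ |t| < 1 then h x / t else 0
    have hG : G.Odd := fun t => by
      simp only [G, abs_neg, Complex.ofReal_neg, div_neg]
      split_ifs <;> simp
    rw [← integral_indicator hS, ← integral_eq_zero_of_odd (μ := volume) hG,
      ← integral_sub_left_eq_self G volume x]
    congr 1 with y
    simp only [S, G, ψ, indicator, mem_ofPred_eq, mem_ball, Real.dist_eq, abs_sub_comm y x,
      Complex.ofReal_sub]
    split_ifs <;> simp_all
  rw [hsplit, integral_add hI hψ, hψ0, add_zero]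

theorem hilbertT_eq_integral_hilbertIntegrand (hh : LipschitzWith K h) (hi : Integrable h)
    (x : ℝ) : hilbertT h x = ((Real.pi : ℂ) * Complex.I)⁻¹ * ∫ y, hilbertIntegrand h x y := by
  refine Tendsto.limUnder_eq (Tendsto.const_mul _ ?_)
  refine (tendsto_setIntegral_lt_abs_sub (integrable_hilbertIntegrand hh hi x) x).congr' ?_
  filter_upwards [self_mem_nhdsWithin] with ε hε
  exact (setIntegral_div_sub_eq_setIntegral_hilbertIntegrand hh hi x hε).symm

end Lipschitz

theorem commHilbert_eq_integral {f g : ℝ → ℂ} {K K' : ℝ≥0} (hg : LipschitzWith K g)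
    (hgi : Integrable g) (hfg : LipschitzWith K' fun y => f y * g y)
    (hfgi : Integrable fun y => f y * g y) (x : ℝ) :
    commHilbert f g x =
      ((Real.pi : ℂ) * Complex.I)⁻¹ * ∫ y, (f x - f y) * g y / ((x : ℂ) - (y : ℂ)) := by
  rw [commHilbert, hilbertT_eq_integral_hilbertIntegrand hg hgi,
    hilbertT_eq_integral_hilbertIntegrand hfg hfgi, mul_left_comm, ← mul_sub,
    ← integral_const_mul, ← integral_sub ((integrable_hilbertIntegrand hg hgi x).const_mul _)
      (integrable_hilbertIntegrand hfg hfgi x)]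
  congr 2 with y
  by_cases hy : y ∈ ball x 1 <;>
    simp only [hilbertIntegrand, indicator_of_mem, indicator_of_notMem, hy, not_false_eq_true] <;>
    ring

theorem eLpNorm_two_pow_two {α E : Type*} [MeasurableSpace α] [NormedAddCommGroup E]
    {μ : Measure α} (f : α → E) : eLpNorm f 2 μ ^ 2 = ∫⁻ a, ‖f a‖ₑ ^ 2 ∂μ := by
  simpa using eLpNorm_nnreal_pow_eq_lintegral (f := f) (μ := μ) (p := 2) two_ne_zero

theorem ENNReal.lintegral_mul_sq_le {α : Type*} [MeasurableSpace α] {μ : Measure α}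
    {f g : α → ℝ≥0∞} (hf : AEMeasurable f μ) (hg : AEMeasurable g μ) :
    (∫⁻ a, f a * g a ∂μ) ^ 2 ≤ (∫⁻ a, f a ^ 2 ∂μ) * ∫⁻ a, g a ^ 2 ∂μ := by
  have h := ENNReal.lintegral_mul_le_Lp_mul_Lq μ Real.HolderConjugate.two_two hf hg
  simp only [Pi.mul_apply, ENNReal.rpow_two] at h
  calc (∫⁻ a, f a * g a ∂μ) ^ 2
      ≤ ((∫⁻ a, f a ^ 2 ∂μ) ^ (1 / 2 : ℝ) * (∫⁻ a, g a ^ 2 ∂μ) ^ (1 / 2 : ℝ)) ^ 2 := by gcongr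
    _ = (∫⁻ a, f a ^ 2 ∂μ) * ∫⁻ a, g a ^ 2 ∂μ := by
      rw [mul_pow, ← ENNReal.rpow_mul_natCast, ← ENNReal.rpow_mul_natCast]
      norm_num

theorem lintegral_Ioc_rpow_neg_half :
    ∫⁻ u in Ioc (0 : ℝ) 1, ENNReal.ofReal (u ^ (-1 / 2 : ℝ)) = 2 := by
  have hint : IntegrableOn (fun u : ℝ => u ^ (-1 / 2 : ℝ)) (Ioc 0 1) := by
    rw [← intervalIntegrable_iff_integrableOn_Ioc_of_le zero_le_one]
    exact intervalIntegral.intervalIntegrable_rpow' (by norm_num)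
  have hnonneg : 0 ≤ᵐ[volume.restrict (Ioc 0 1)] fun u : ℝ => u ^ (-1 / 2 : ℝ) :=
    (ae_restrict_iff' measurableSet_Ioc).mpr (.of_forall fun u hu => Real.rpow_nonneg hu.1.le _)
  rw [← ofReal_integral_eq_lintegral_ofReal hint hnonneg,
    ← intervalIntegral.integral_of_le zero_le_one, integral_rpow (.inl (by norm_num))]
  norm_num

theorem lintegral_Ioc_sq_le_two_mul {F : ℝ → ℝ≥0∞} (hF : AEMeasurable F) :
    (∫⁻ u in Ioc (0 : ℝ) 1, F u) ^ 2 ≤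
      2 * ∫⁻ u in Ioc (0 : ℝ) 1, ENNReal.ofReal (u ^ (1 / 2 : ℝ)) * F u ^ 2 := by
  have hw : Measurable fun u : ℝ => ENNReal.ofReal (u ^ (-1 / 4 : ℝ)) := by fun_prop
  have hw' : Measurable fun u : ℝ => ENNReal.ofReal (u ^ (1 / 4 : ℝ)) := by fun_prop
  have hsq (r : ℝ) {u : ℝ} (hu : 0 < u) :
      ENNReal.ofReal (u ^ r) ^ 2 = ENNReal.ofReal (u ^ (2 * r)) := by
    rw [← ENNReal.ofReal_pow (by positivity), ← Real.rpow_natCast, ← Real.rpow_mul hu.le,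
      mul_comm]
    norm_num
  have hcs := ENNReal.lintegral_mul_sq_le (μ := volume.restrict (Ioc (0 : ℝ) 1))
    (f := fun u => ENNReal.ofReal (u ^ (-1 / 4 : ℝ)))
    (g := fun u => ENNReal.ofReal (u ^ (1 / 4 : ℝ)) * F u) hw.aemeasurable
    (hw'.aemeasurable.mul hF.restrict)
  have hprod : ∫⁻ u in Ioc (0 : ℝ) 1,
      ENNReal.ofReal (u ^ (-1 / 4 : ℝ)) * (ENNReal.ofReal (u ^ (1 / 4 : ℝ)) * F u) =
        ∫⁻ u in Ioc (0 : ℝ) 1, F u := by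
    refine setLIntegral_congr_fun measurableSet_Ioc fun u hu => ?_
    rw [← mul_assoc, ← ENNReal.ofReal_mul (Real.rpow_nonneg hu.1.le _), ← Real.rpow_add hu.1]
    norm_num
  have hleft : ∫⁻ u in Ioc (0 : ℝ) 1, ENNReal.ofReal (u ^ (-1 / 4 : ℝ)) ^ 2 = 2 := by
    rw [← lintegral_Ioc_rpow_neg_half]
    refine setLIntegral_congr_fun measurableSet_Ioc fun u hu => ?_
    rw [hsq _ hu.1]
    norm_num
  have hright : ∫⁻ u in Ioc (0 : ℝ) 1, (ENNReal.ofReal (u ^ (1 / 4 : ℝ)) * F u) ^ 2 =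
      ∫⁻ u in Ioc (0 : ℝ) 1, ENNReal.ofReal (u ^ (1 / 2 : ℝ)) * F u ^ 2 := by
    refine setLIntegral_congr_fun measurableSet_Ioc fun u hu => ?_
    rw [mul_pow, hsq _ hu.1]
    norm_num
  rwa [hprod, hleft, hright] at hcs

theorem lintegral_comp_mul_add {G : ℝ → ℝ≥0∞} (hG : Measurable G) {a : ℝ} (ha : 0 < a)
    (b : ℝ) : ∫⁻ y, G (a * y + b) = (ENNReal.ofReal a)⁻¹ * ∫⁻ t, G t := by
  have hmap : Measure.map (a * ·) volume = ENNReal.ofReal |a⁻¹| • (volume : Measure ℝ) :=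
    Real.map_volume_mul_left ha.ne'
  rw [← lintegral_map (f := fun z => G (z + b)) (by fun_prop) (by fun_prop), hmap,
    lintegral_smul_measure, lintegral_add_right_eq_self (μ := volume) G b, smul_eq_mul,
    abs_of_pos (inv_pos.mpr ha), ENNReal.ofReal_inv_of_pos ha]

theorem lintegral_lintegral_Ioc_rpow_mul_comp {G : ℝ → ℝ≥0∞} (hG : Measurable G) (x : ℝ) :
    ∫⁻ y, ∫⁻ u in Ioc (0 : ℝ) 1, ENNReal.ofReal (u ^ (1 / 2 : ℝ)) * G (x + (y - x) * u) =
      2 * ∫⁻ t, G t := by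
  have hinner : ∀ u ∈ Ioc (0 : ℝ) 1,
      ∫⁻ y, ENNReal.ofReal (u ^ (1 / 2 : ℝ)) * G (x + (y - x) * u) =
        ENNReal.ofReal (u ^ (-1 / 2 : ℝ)) * ∫⁻ t, G t := by
    intro u hu
    have hdil : ∫⁻ y, G (x + (y - x) * u) = (ENNReal.ofReal u)⁻¹ * ∫⁻ t, G t := by
      rw [← lintegral_comp_mul_add hG hu.1 (x - u * x)]
      congr with y
      ring_nf
    rw [lintegral_const_mul _ (by fun_prop), hdil, ← mul_assoc,
      ← ENNReal.ofReal_inv_of_pos hu.1, ← ENNReal.ofReal_mul (Real.rpow_nonneg hu.1.le _),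
      ← Real.rpow_neg_one, ← Real.rpow_add hu.1]
    norm_num
  rw [lintegral_lintegral_swap (by fun_prop), setLIntegral_congr_fun measurableSet_Ioc hinner,
    lintegral_mul_const _ (by fun_prop), lintegral_Ioc_rpow_neg_half]

section Slope

variable {E : Type*} [NormedAddCommGroup E] [NormedSpace ℝ E] [CompleteSpace E] {f : ℝ → E}

theorem slope_eq_integral_deriv (hf : Differentiable ℝ f) (hf' : Continuous (deriv f))
    {x y : ℝ} (hxy : x ≠ y) : slope f x y = ∫ u in (0 : ℝ)..1, deriv f (x + (y - x) * u) := by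
  have hsub : (y - x) • ∫ u in (0 : ℝ)..1, deriv f (x + (y - x) * u) = f y - f x := by
    rw [intervalIntegral.smul_integral_comp_add_mul, mul_zero, add_zero, mul_one,
      add_sub_cancel, intervalIntegral.integral_deriv_eq_sub (fun t _ => hf t)
        (hf'.intervalIntegrable _ _)]
  rw [slope_def_module, ← hsub, inv_smul_smul₀ (sub_ne_zero.mpr hxy.symm)]

theorem eLpNorm_slope_le (hf : Differentiable ℝ f) (hf' : Continuous (deriv f)) (x : ℝ) :
    eLpNorm (slope f x) 2 volume ≤ 2 * eLpNorm (deriv f) 2 volume := by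
  set D : ℝ → E := fun y => ∫ u in Ioc (0 : ℝ) 1, deriv f (x + (y - x) * u)
  have hD : slope f x =ᵐ[volume] D := by
    filter_upwards [compl_mem_ae_iff.mpr (measure_singleton x)] with y hy
    rw [slope_eq_integral_deriv hf hf' (Ne.symm hy), intervalIntegral.integral_of_le zero_le_one]
  have hpt (y : ℝ) : ‖D y‖ₑ ^ 2 ≤ 2 * ∫⁻ u in Ioc (0 : ℝ) 1,
      ENNReal.ofReal (u ^ (1 / 2 : ℝ)) * ‖deriv f (x + (y - x) * u)‖ₑ ^ 2 :=
    (pow_le_pow_left' (enorm_integral_le_lintegral_enorm _) 2).trans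
      (lintegral_Ioc_sq_le_two_mul (by fun_prop))
  rw [eLpNorm_congr_ae hD, ← ENNReal.pow_le_pow_left_iff two_ne_zero, mul_pow,
    eLpNorm_two_pow_two, eLpNorm_two_pow_two]
  calc ∫⁻ y, ‖D y‖ₑ ^ 2
      ≤ ∫⁻ y, 2 * ∫⁻ u in Ioc (0 : ℝ) 1,
          ENNReal.ofReal (u ^ (1 / 2 : ℝ)) * ‖deriv f (x + (y - x) * u)‖ₑ ^ 2 :=
        lintegral_mono hpt
    _ = 2 ^ 2 * ∫⁻ t, ‖deriv f t‖ₑ ^ 2 := by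
        rw [lintegral_const_mul' _ _ ENNReal.ofNat_ne_top,
          lintegral_lintegral_Ioc_rpow_mul_comp (G := fun t => ‖deriv f t‖ₑ ^ 2)
            (hf'.enorm.measurable.pow_const 2),
          ← mul_assoc, sq]

end Slope

theorem slope_mul_eq_div_sub {f g : ℝ → ℂ} (x y : ℝ) :
    slope f x y * g y = (f x - f y) * g y / ((x : ℂ) - (y : ℂ)) := by
  rw [slope_def_module, Complex.real_smul, Complex.ofReal_inv, Complex.ofReal_sub, ← neg_sub,
    inv_neg]
  ring

theorem lintegral_enorm_div_sub_le {f g : ℝ → ℂ} (hf : Differentiable ℝ f)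
    (hf' : Continuous (deriv f)) (hg : AEStronglyMeasurable g) (x : ℝ) :
    ∫⁻ y, ‖(f x - f y) * g y / ((x : ℂ) - (y : ℂ))‖ₑ ≤
      2 * eLpNorm (deriv f) 2 volume * eLpNorm g 2 volume := by
  have hslope : AEStronglyMeasurable (slope f x) := by
    rw [slope_fun_def]
    exact ((measurable_id.sub_const x).inv.smul
      (hf.continuous.measurable.sub_const _)).aestronglyMeasurable
  simp_rw [← slope_mul_eq_div_sub]
  calc ∫⁻ y, ‖slope f x y * g y‖ₑ = eLpNorm (slope f x • g) 1 volume :=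
        eLpNorm_one_eq_lintegral_enorm.symm
    _ ≤ eLpNorm (slope f x) 2 volume * eLpNorm g 2 volume :=
        eLpNorm_smul_le_mul_eLpNorm hg hslope
    _ ≤ 2 * eLpNorm (deriv f) 2 volume * eLpNorm g 2 volume := by
        gcongr
        exact eLpNorm_slope_le hf hf' x

theorem SchwartzMap.exists_lipschitzWith {F : Type*} [NormedAddCommGroup F] [NormedSpace ℝ F]
    (h : 𝓢(ℝ, F)) : ∃ K, LipschitzWith K h :=
  ⟨_, lipschitzWith_of_nnnorm_deriv_le h.differentiable fun x => by
    simpa [norm_toNNReal] using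
      Real.toNNReal_le_toNNReal (norm_le_seminorm ℝ (derivCLM ℝ F h) x)⟩

theorem SchwartzMap.continuous_deriv {F : Type*} [NormedAddCommGroup F] [NormedSpace ℝ F]
    (h : 𝓢(ℝ, F)) : Continuous (deriv h) :=
  (h.smooth 1).continuous_deriv le_rfl

theorem enorm_pi_mul_I_inv_le_one : ‖((Real.pi : ℂ) * Complex.I)⁻¹‖ₑ ≤ 1 := by
  rw [← ofReal_norm, ENNReal.ofReal_le_one, norm_inv, norm_mul, Complex.norm_real,
    Complex.norm_I, mul_one, Real.norm_of_nonneg Real.pi_pos.le]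
  exact inv_le_one_of_one_le₀ (by linarith [Real.pi_gt_three])

/-- For smooth rapidly decaying `f, g`, `‖[f,H]g‖_{L∞} ≤ C ‖f'‖_{L²} ‖g‖_{L²}` with a
universal constant `C`. -/
theorem commutator_hilbert_Linfty_bound :
    ∃ C : ℝ, 0 < C ∧ ∀ f g : SchwartzMap ℝ ℂ,
      eLpNorm (commHilbert (⇑f) (⇑g)) ⊤ (volume : Measure ℝ) ≤
        ENNReal.ofReal C * eLpNorm (deriv (⇑f)) 2 (volume : Measure ℝ) *
          eLpNorm (⇑g) 2 (volume : Measure ℝ) := by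
  refine ⟨2, two_pos, fun f g => ?_⟩
  set fg := SchwartzMap.pairing (ContinuousLinearMap.mul ℂ ℂ) f g
  obtain ⟨K, hg⟩ := g.exists_lipschitzWith
  obtain ⟨K', hfg⟩ := fg.exists_lipschitzWith
  have hpt (x : ℝ) :
      ‖commHilbert f g x‖ₑ ≤ 2 * eLpNorm (deriv f) 2 volume * eLpNorm g 2 volume := by
    rw [commHilbert_eq_integral hg g.integrable hfg fg.integrable x, enorm_mul]
    calc _ ≤ 1 * ∫⁻ y, ‖(f x - f y) * g y / ((x : ℂ) - (y : ℂ))‖ₑ :=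
          mul_le_mul' enorm_pi_mul_I_inv_le_one (enorm_integral_le_lintegral_enorm _)
      _ ≤ _ := (one_mul _).trans_le <| lintegral_enorm_div_sub_le f.differentiable
          f.continuous_deriv g.continuous.aestronglyMeasurable x
  rw [ENNReal.ofReal_ofNat, eLpNorm_exponent_top]
  exact eLpNormEssSup_le_of_ae_enorm_bound (.of_forall hpt)
end

section
/- For f, g ∈ C¹(ℝ) with the relevant norms finite, ‖fg‖_{Ḣ^{1/2}} ≤ C(‖f‖_{L∞} ‖g‖_{Ḣ^{1/2}} + ‖g‖_{L∞} ‖f‖_{Ḣ^{1/2}}) for a universal constant C. -/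
open MeasureTheory
open scoped ENNReal

/-- The squared homogeneous `Ḣ^{1/2}` seminorm. -/
noncomputable def hHalfSq (f : ℝ → ℂ) : ℝ≥0∞ :=
  ENNReal.ofReal (1 / (2 * Real.pi)) *
    ∫⁻ x : ℝ, ∫⁻ y : ℝ, ENNReal.ofReal (‖f x - f y‖ ^ 2 / (x - y) ^ 2)

/-- The homogeneous `Ḣ^{1/2}` seminorm. -/
noncomputable def hHalf (f : ℝ → ℂ) : ℝ≥0∞ := hHalfSq f ^ (1 / 2 : ℝ)

/-!
Split `f x g x - f y g y = f x (g x - g y) + (f x - f y) g y`. Off a null set `|f x| ≤ ‖f‖_∞`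
and `|g y| ≤ ‖g‖_∞`, so `(u + v)² ≤ 2 (u² + v²)` bounds the `Ḣ^{1/2}` integrand of `f g` by
`2 (‖f‖_∞² · (integrand of g) + ‖g‖_∞² · (integrand of f))`. Integrating twice and taking square
roots (`√(a + b) ≤ √a + √b`) gives the estimate with `C = √2`.
-/

theorem enorm_mul_sub_mul_sq_le {R : Type*} [SeminormedRing R] (a b c d : R) :
    ‖a * b - c * d‖ₑ ^ 2 ≤ 2 * (‖a‖ₑ ^ 2 * ‖b - d‖ₑ ^ 2 + ‖d‖ₑ ^ 2 * ‖a - c‖ₑ ^ 2) := by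
  have hsplit : ‖a * b - c * d‖₊ ≤ ‖a‖₊ * ‖b - d‖₊ + ‖d‖₊ * ‖a - c‖₊ := by
    calc ‖a * b - c * d‖₊ = ‖a * (b - d) + (a - c) * d‖₊ := by noncomm_ring
      _ ≤ ‖a * (b - d)‖₊ + ‖(a - c) * d‖₊ := nnnorm_add_le _ _
      _ ≤ ‖a‖₊ * ‖b - d‖₊ + ‖d‖₊ * ‖a - c‖₊ := by
        rw [mul_comm ‖d‖₊]
        gcongr <;> exact nnnorm_mul_le _ _
  have hsq : ‖a * b - c * d‖₊ ^ 2 ≤ 2 * (‖a‖₊ ^ 2 * ‖b - d‖₊ ^ 2 + ‖d‖₊ ^ 2 * ‖a - c‖₊ ^ 2) := by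
    simpa only [mul_pow] using (pow_le_pow_left₀ zero_le hsplit 2).trans add_sq_le
  simp only [enorm_eq_nnnorm]
  exact_mod_cast hsq

theorem lintegral_const_mul_add_const_mul {α : Type*} [MeasurableSpace α] {μ : Measure α}
    {F G : α → ℝ≥0∞} (hF : Measurable F) (hG : Measurable G) (a b : ℝ≥0∞) :
    ∫⁻ x, a * F x + b * G x ∂μ = a * ∫⁻ x, F x ∂μ + b * ∫⁻ x, G x ∂μ := by
  rw [lintegral_add_left (hF.const_mul a), lintegral_const_mul a hF, lintegral_const_mul b hG]

theorem ENNReal.rpow_half_mul_sq_mul_add_sq_mul_le (c a b u v : ℝ≥0∞) :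
    (c * (a ^ 2 * u + b ^ 2 * v)) ^ (1 / 2 : ℝ) ≤
      c ^ (1 / 2 : ℝ) * (a * u ^ (1 / 2 : ℝ) + b * v ^ (1 / 2 : ℝ)) := by
  have hsqrt_sq (a : ℝ≥0∞) : (a ^ 2) ^ (1 / 2 : ℝ) = a := by
    rw [← ENNReal.rpow_natCast, ← ENNReal.rpow_mul]
    norm_num
  rw [ENNReal.mul_rpow_of_nonneg _ _ (by norm_num)]
  gcongr
  calc (a ^ 2 * u + b ^ 2 * v) ^ (1 / 2 : ℝ)
      ≤ (a ^ 2 * u) ^ (1 / 2 : ℝ) + (b ^ 2 * v) ^ (1 / 2 : ℝ) :=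
        ENNReal.rpow_add_le_add_rpow _ _ (by norm_num) (by norm_num)
    _ = a * u ^ (1 / 2 : ℝ) + b * v ^ (1 / 2 : ℝ) := by
        rw [ENNReal.mul_rpow_of_nonneg _ _ (by norm_num),
          ENNReal.mul_rpow_of_nonneg _ _ (by norm_num), hsqrt_sq, hsqrt_sq]

section Integrand

variable {E : Type*}

noncomputable def hHalfIntegrand [SeminormedAddCommGroup E] (f : ℝ → E) (x y : ℝ) : ℝ≥0∞ :=
  ENNReal.ofReal (‖f x - f y‖ ^ 2 / (x - y) ^ 2)

-- Both sides vanish on the diagonal: `a / 0 = 0` in `ℝ`, and `0 / 0 = 0` in `ℝ≥0∞`.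
theorem hHalfIntegrand_eq_div [SeminormedAddCommGroup E] (f : ℝ → E) (x y : ℝ) :
    hHalfIntegrand f x y = ‖f x - f y‖ₑ ^ 2 / ENNReal.ofReal ((x - y) ^ 2) := by
  rcases eq_or_ne x y with rfl | hxy
  · simp [hHalfIntegrand, ← ofReal_norm]
  rw [hHalfIntegrand, ENNReal.ofReal_div_of_pos (by positivity [sub_ne_zero.2 hxy]),
    ENNReal.ofReal_pow (norm_nonneg _), ofReal_norm]

theorem hHalfIntegrand_mul_le [SeminormedRing E] (f g : ℝ → E) (x y : ℝ) {A B : ℝ≥0∞}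
    (hfx : ‖f x‖ₑ ≤ A) (hgy : ‖g y‖ₑ ≤ B) :
    hHalfIntegrand (f * g) x y ≤
      2 * (A ^ 2 * hHalfIntegrand g x y + B ^ 2 * hHalfIntegrand f x y) := by
  simp only [hHalfIntegrand_eq_div, Pi.mul_apply, ← mul_div_assoc, ← ENNReal.add_div]
  gcongr
  refine (enorm_mul_sub_mul_sq_le _ _ _ _).trans ?_
  gcongr

theorem measurable_uncurry_hHalfIntegrand [NormedAddCommGroup E] [MeasurableSpace E]
    [BorelSpace E] [SecondCountableTopology E] {f : ℝ → E} (hf : Measurable f) :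
    Measurable fun p : ℝ × ℝ => hHalfIntegrand f p.1 p.2 := by
  unfold hHalfIntegrand
  fun_prop

theorem measurable_hHalfIntegrand [NormedAddCommGroup E] [MeasurableSpace E] [BorelSpace E]
    [SecondCountableTopology E] {f : ℝ → E} (hf : Measurable f) (x : ℝ) :
    Measurable (hHalfIntegrand f x) := by
  unfold hHalfIntegrand
  fun_prop

section NormedRing

variable [NormedRing E] [MeasurableSpace E] [BorelSpace E] [SecondCountableTopology E]
  {f g : ℝ → E}

theorem lintegral_hHalfIntegrand_mul_le (hf : Measurable f) (hg : Measurable g) {x : ℝ}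
    {A B : ℝ≥0∞} (hfx : ‖f x‖ₑ ≤ A) (hg_le : ∀ᵐ y, ‖g y‖ₑ ≤ B) :
    ∫⁻ y, hHalfIntegrand (f * g) x y ≤
      2 * (A ^ 2 * (∫⁻ y, hHalfIntegrand g x y) + B ^ 2 * ∫⁻ y, hHalfIntegrand f x y) := by
  rw [← lintegral_const_mul_add_const_mul (measurable_hHalfIntegrand hg x)
    (measurable_hHalfIntegrand hf x), ← lintegral_const_mul' _ _ ENNReal.ofNat_ne_top]
  exact lintegral_mono_ae (hg_le.mono fun y hgy => hHalfIntegrand_mul_le f g x y hfx hgy)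

theorem lintegral_lintegral_hHalfIntegrand_mul_le (hf : Measurable f) (hg : Measurable g) :
    ∫⁻ x, ∫⁻ y, hHalfIntegrand (f * g) x y ≤
      2 * (eLpNorm f ⊤ volume ^ 2 * (∫⁻ x, ∫⁻ y, hHalfIntegrand g x y) +
        eLpNorm g ⊤ volume ^ 2 * ∫⁻ x, ∫⁻ y, hHalfIntegrand f x y) := by
  have hf_le : ∀ᵐ x, ‖f x‖ₑ ≤ eLpNorm f ⊤ volume := by
    simpa only [eLpNorm_exponent_top] using enorm_ae_le_eLpNormEssSup f volume
  have hg_le : ∀ᵐ y, ‖g y‖ₑ ≤ eLpNorm g ⊤ volume := by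
    simpa only [eLpNorm_exponent_top] using enorm_ae_le_eLpNormEssSup g volume
  calc ∫⁻ x, ∫⁻ y, hHalfIntegrand (f * g) x y
      ≤ ∫⁻ x, 2 * (eLpNorm f ⊤ volume ^ 2 * (∫⁻ y, hHalfIntegrand g x y) +
          eLpNorm g ⊤ volume ^ 2 * ∫⁻ y, hHalfIntegrand f x y) :=
        lintegral_mono_ae (hf_le.mono fun x hfx => lintegral_hHalfIntegrand_mul_le hf hg hfx hg_le)
    _ = _ := by
        rw [lintegral_const_mul' _ _ ENNReal.ofNat_ne_top, lintegral_const_mul_add_const_mul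
          (measurable_uncurry_hHalfIntegrand hg).lintegral_prod_right'
          (measurable_uncurry_hHalfIntegrand hf).lintegral_prod_right']

end NormedRing

end Integrand

theorem hHalfSq_eq_lintegral_lintegral (f : ℝ → ℂ) :
    hHalfSq f = ENNReal.ofReal (1 / (2 * Real.pi)) * ∫⁻ x, ∫⁻ y, hHalfIntegrand f x y := rfl

theorem hHalfSq_mul_le {f g : ℝ → ℂ} (hf : Measurable f) (hg : Measurable g) :
    hHalfSq (f * g) ≤
      2 * (eLpNorm f ⊤ volume ^ 2 * hHalfSq g + eLpNorm g ⊤ volume ^ 2 * hHalfSq f) := by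
  simp only [hHalfSq_eq_lintegral_lintegral]
  calc _ ≤ ENNReal.ofReal (1 / (2 * Real.pi)) *
        (2 * (eLpNorm f ⊤ volume ^ 2 * (∫⁻ x, ∫⁻ y, hHalfIntegrand g x y) +
          eLpNorm g ⊤ volume ^ 2 * ∫⁻ x, ∫⁻ y, hHalfIntegrand f x y)) := by
        gcongr
        exact lintegral_lintegral_hHalfIntegrand_mul_le hf hg
    _ = _ := by ring

theorem hHalf_mul_le {f g : ℝ → ℂ} (hf : Measurable f) (hg : Measurable g) :
    hHalf (f * g) ≤
      2 ^ (1 / 2 : ℝ) * (eLpNorm f ⊤ volume * hHalf g + eLpNorm g ⊤ volume * hHalf f) :=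
  (ENNReal.rpow_le_rpow (hHalfSq_mul_le hf hg) (by norm_num)).trans
    (ENNReal.rpow_half_mul_sq_mul_add_sq_mul_le _ _ _ _ _)

/-- For bounded `C¹` functions `f, g` with finite `Ḣ^{1/2}` seminorms,
`‖fg‖_{Ḣ^{1/2}} ≤ C (‖f‖_{L∞} ‖g‖_{Ḣ^{1/2}} + ‖g‖_{L∞} ‖f‖_{Ḣ^{1/2}})` for a universal `C`. -/
theorem hHalf_product_bound :
    ∃ C : ℝ, 0 < C ∧ ∀ f g : ℝ → ℂ, ContDiff ℝ 1 f → ContDiff ℝ 1 g →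
      MemLp f ⊤ (volume : Measure ℝ) → MemLp g ⊤ (volume : Measure ℝ) →
      hHalf f < ⊤ → hHalf g < ⊤ →
      hHalf (fun x => f x * g x) ≤
        ENNReal.ofReal C * (eLpNorm f ⊤ (volume : Measure ℝ) * hHalf g +
          eLpNorm g ⊤ (volume : Measure ℝ) * hHalf f) := by
  refine ⟨Real.sqrt 2, by positivity, fun f g hf hg _ _ _ _ => ?_⟩
  have hC : ENNReal.ofReal (Real.sqrt 2) = 2 ^ (1 / 2 : ℝ) := by
    rw [Real.sqrt_eq_rpow, ← ENNReal.ofReal_rpow_of_nonneg zero_le_two (by norm_num),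
      ENNReal.ofReal_ofNat]
  rw [hC]
  exact hHalf_mul_le hf.continuous.measurable hg.continuous.measurable
end
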